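/- Let S be an N-party entropy vector that is realized by a simple tree graph model, i.e., there exists a simple N-party holographic graph model T whose underlying graph is a tree and whose min-cut entropy vector equals S. Then the PMI P(S) is a down-set in the MI-poset (hence a KC-PMI), and the line graph L_{H_{P(S)}} of the correlation hypergraph of P(S) is a chordal graph. -/

import Mathlib

namespace HEC

/-- The parties `⟦N⟧ = {0,1,…,N}`, where `0` is the purifier. -/
abbrev Party (N : ℕ) := Fin (N + 1)

/-- A collection of parties. -/
abbrev PSet (N : ℕ) := Finset (Party N)

/-- MI instances: unordered pairs of subsets of parties. -/
abbrev MI (N : ℕ) := Sym2 (PSet N)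

/-- `m` is an MI instance, i.e. an unordered pair of disjoint nonempty subsets of `⟦N⟧`. -/
def IsMIInst {N : ℕ} (m : MI N) : Prop :=
  ∃ Y Z : PSet N, m = s(Y, Z) ∧ Y.Nonempty ∧ Z.Nonempty ∧ Disjoint Y Z

/-- The MI-poset order: `{Y,Z} ⪯ {Y',Z'}` iff (`Y ⊆ Y'` and `Z ⊆ Z'`) or
(`Y ⊆ Z'` and `Z ⊆ Y'`).  (The two cases are absorbed by the existential over
representatives of the unordered pairs.) -/
def MIle {N : ℕ} (m m' : MI N) : Prop :=
  ∃ Y Z Y' Z' : PSet N, m = s(Y, Z) ∧ m' = s(Y', Z') ∧ Y ⊆ Y' ∧ Z ⊆ Z'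

/-- An `N`-party entropy vector, extended to all subsets of `⟦N⟧` by the purification
convention: `S ∅ = 0` and `S Y = S (⟦N⟧ \ Y)` whenever `0 ∈ Y`. -/
structure EntropyVec (N : ℕ) where
  S : PSet N → ℝ
  S_empty : S ∅ = 0
  S_purify : ∀ Y : PSet N, (0 : Party N) ∈ Y → S Y = S (Finset.univ \ Y)

/-- Mutual information `I(Y:Z) = S_Y + S_Z - S_{Y∪Z}`. -/
def EntropyVec.I {N : ℕ} (v : EntropyVec N) (Y Z : PSet N) : ℝ :=
  v.S Y + v.S Z - v.S (Y ∪ Z)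

/-- Membership in the subadditivity cone: `I(Y:Z) ≥ 0` for every MI instance. -/
def EntropyVec.InSAC {N : ℕ} (v : EntropyVec N) : Prop :=
  ∀ Y Z : PSet N, Y.Nonempty → Z.Nonempty → Disjoint Y Z → 0 ≤ v.I Y Z

/-- The pattern of marginal independence of `v`: the MI instances vanishing on `v`. -/
def EntropyVec.PMI {N : ℕ} (v : EntropyVec N) : Set (MI N) :=
  {m | ∃ Y Z : PSet N, m = s(Y, Z) ∧ Y.Nonempty ∧ Z.Nonempty ∧ Disjoint Y Z ∧ v.I Y Z = 0}

/-- `P` is a down-set in the MI-poset. -/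
def IsMIDownSet {N : ℕ} (P : Set (MI N)) : Prop :=
  ∀ m m' : MI N, IsMIInst m → m' ∈ P → MIle m m' → m ∈ P

/-- `P` is a KC-PMI: the PMI of some entropy vector in the subadditivity cone,
which moreover is a down-set in the MI-poset. -/
def IsKCPMI {N : ℕ} (P : Set (MI N)) : Prop :=
  (∃ v : EntropyVec N, v.InSAC ∧ P = v.PMI) ∧ IsMIDownSet P

/-- The β-set of `X`: all MI instances `{Y,Z}` with `Y ∪ Z = X`. -/
def betaSet {N : ℕ} (X : PSet N) : Set (MI N) :=
  {m | ∃ Y Z : PSet N, m = s(Y, Z) ∧ Y.Nonempty ∧ Z.Nonempty ∧ Disjoint Y Z ∧ Y ∪ Z = X}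

/-- The antichain `A` of minimal elements of `P̄ = M_N ∖ P`. -/
def minimalMI {N : ℕ} (P : Set (MI N)) : Set (MI N) :=
  {m | IsMIInst m ∧ m ∉ P ∧ ∀ m' : MI N, IsMIInst m' → m' ∉ P → MIle m' m → m' = m}

/-- `β(X)` is positive: `β(X) ⊆ P̄`. -/
def BPos {N : ℕ} (P : Set (MI N)) (X : PSet N) : Prop :=
  ∀ m ∈ betaSet X, m ∉ P

/-- `β(X)` is vanishing: `β(X) ⊆ P`. -/
def BVan {N : ℕ} (P : Set (MI N)) (X : PSet N) : Prop :=
  betaSet X ⊆ P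

/-- `β(X)` is partial: it has elements both in `P` and in `P̄`. -/
def BPart {N : ℕ} (P : Set (MI N)) (X : PSet N) : Prop :=
  (∃ m ∈ betaSet X, m ∈ P) ∧ (∃ m ∈ betaSet X, m ∉ P)

/-- `β(X)` is essential: `β(X) ∩ A ≠ ∅`. -/
def BEss {N : ℕ} (P : Set (MI N)) (X : PSet N) : Prop :=
  ∃ m ∈ betaSet X, m ∈ minimalMI P

/-- `β(X)` is completely essential: `β(X) ⊆ A`. -/
def BCEss {N : ℕ} (P : Set (MI N)) (X : PSet N) : Prop :=
  betaSet X ⊆ minimalMI P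

/-- `β(X)` is non-essential: `β(X) ∩ A = ∅`. -/
def BNEss {N : ℕ} (P : Set (MI N)) (X : PSet N) : Prop :=
  ∀ m ∈ betaSet X, m ∉ minimalMI P

/-- `pos_<(Y)`: the proper subsystems `Z ⊊ Y` with `|Z| ≥ 2` and `β(Z)` positive. -/
def posBelow {N : ℕ} (P : Set (MI N)) (Y : PSet N) : Set (PSet N) :=
  {Z | Z ⊂ Y ∧ 2 ≤ Z.card ∧ BPos P Z}

/-- `Max(pos_<(Y))`: the inclusion-maximal elements of `pos_<(Y)`. -/
def maxPosBelow {N : ℕ} (P : Set (MI N)) (Y : PSet N) : Set (PSet N) :=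
  {Z | Z ∈ posBelow P Y ∧ ∀ Z' ∈ posBelow P Y, Z ⊆ Z' → Z = Z'}

/-- The MI instance `m = {Y,Z}` splits `X` if `X ∩ Y ≠ ∅` and `X ∩ Z ≠ ∅`. -/
def Splits {N : ℕ} (m : MI N) (X : PSet N) : Prop :=
  ∃ Y Z : PSet N, m = s(Y, Z) ∧ (X ∩ Y).Nonempty ∧ (X ∩ Z).Nonempty

/-- The hyperedges of the correlation hypergraph `H_P`: one hyperedge `e_X` for each
`X ⊆ ⟦N⟧` (with `|X| ≥ 2`) whose β-set is positive.  Vertices `v_ℓ` are identified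
with the parties `ℓ ∈ ⟦N⟧`, and hyperedges with the corresponding subsystems. -/
def Hedge {N : ℕ} (P : Set (MI N)) : Set (PSet N) :=
  {X | 2 ≤ X.card ∧ BPos P X}

/-- The hyperedges of the sub-hypergraph `H_Y`: the hyperedges `e_Z` with `Z ⊊ Y`. -/
def subEdges {N : ℕ} (P : Set (MI N)) (Y : PSet N) : Set (PSet N) :=
  {Z | Z ⊂ Y ∧ Z ∈ Hedge P}

/-- One step in a hypergraph with hyperedge set `E`: `a` and `b` lie in a common
hyperedge. -/
def hStep {N : ℕ} (E : Set (PSet N)) (a b : Party N) : Prop :=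
  ∃ e ∈ E, a ∈ e ∧ b ∈ e

/-- Connectivity of the hypergraph with vertex set `V` and hyperedge set `E`:
every two vertices are joined by a path (a one-vertex hypergraph is connected). -/
def hConn {N : ℕ} (V : PSet N) (E : Set (PSet N)) : Prop :=
  ∀ a ∈ V, ∀ b ∈ V, Relation.ReflTransGen (hStep E) a b

/-- The vertex set of the connected component of `a` in the hypergraph with
vertex set `V` and hyperedge set `E`. -/
def hComp {N : ℕ} (V : PSet N) (E : Set (PSet N)) (a : Party N) : Set (Party N) :=
  {b | b ∈ V ∧ Relation.ReflTransGen (hStep E) a b}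

/-- A clique of the line graph `L_{H_P}`: a set of hyperedges of `H_P` which are
pairwise adjacent (distinct hyperedges being adjacent iff they intersect). -/
def IsLineClique {N : ℕ} (P : Set (MI N)) (Q : Set (PSet N)) : Prop :=
  Q ⊆ Hedge P ∧ ∀ e ∈ Q, ∀ f ∈ Q, e ≠ f → (e ∩ f).Nonempty

/-- A max-clique of the line graph `L_{H_P}`: a (nonempty) clique which is maximal
under inclusion. -/
def IsMaxClique {N : ℕ} (P : Set (MI N)) (Q : Set (PSet N)) : Prop :=
  Q.Nonempty ∧ IsLineClique P Q ∧ ∀ Q' : Set (PSet N), IsLineClique P Q' → Q ⊆ Q' → Q = Q'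

/-- `Q^∩`: the intersection of the hyperedges in `Q`, viewed as sets of vertices. -/
def qInter {N : ℕ} (Q : Set (PSet N)) : Set (Party N) :=
  {ℓ | ∀ e ∈ Q, ℓ ∈ e}

/-- An `N`-party holographic graph model: a finite weighted graph with no loops or
multiple edges (encoded by a symmetric nonnegative weight function whose support is
the edge set, so that every edge has strictly positive weight and the diagonal
vanishes), together with a labeling of the boundary vertices (those with
`label v = some ℓ`) by parties in `⟦N⟧` such that every party labels at least one
boundary vertex. -/
structure GraphModel (N : ℕ) where
  V : Type
  [fintypeV : Fintype V]
  [decEqV : DecidableEq V]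
  w : V → V → ℝ
  w_symm : ∀ u v : V, w u v = w v u
  w_loopless : ∀ v : V, w v v = 0
  w_nonneg : ∀ u v : V, 0 ≤ w u v
  label : V → Option (Party N)
  label_surj : ∀ ℓ : Party N, ∃ v : V, label v = some ℓ

attribute [instance] GraphModel.fintypeV GraphModel.decEqV

/-- `C` is a `Y`-cut: its intersection with the boundary vertices consists exactly of
the boundary vertices labeled by parties in `Y`. -/
def IsCut {N : ℕ} (G : GraphModel N) (Y : PSet N) (C : Finset G.V) : Prop :=
  ∀ v : G.V, ∀ ℓ : Party N, G.label v = some ℓ → (v ∈ C ↔ ℓ ∈ Y)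

/-- The cost `‖C‖` of a cut: the total weight of the edges with exactly one endpoint
in `C`. -/
def cutCost {N : ℕ} (G : GraphModel N) (C : Finset G.V) : ℝ :=
  ∑ u ∈ C, ∑ v ∈ Cᶜ, G.w u v

/-- `C` is a min-cut for `Y`: a `Y`-cut of minimal cost among all `Y`-cuts. -/
def IsMinCut {N : ℕ} (G : GraphModel N) (Y : PSet N) (C : Finset G.V) : Prop :=
  IsCut G Y C ∧ ∀ C' : Finset G.V, IsCut G Y C' → cutCost G C ≤ cutCost G C'

/-- `C` is a minimal min-cut for `Y`: a min-cut for `Y` which is minimal with respect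
to set inclusion among all min-cuts for `Y`. -/
def IsMinimalMinCut {N : ℕ} (G : GraphModel N) (Y : PSet N) (C : Finset G.V) : Prop :=
  IsMinCut G Y C ∧ ∀ C' : Finset G.V, IsMinCut G Y C' → C' ⊆ C → C' = C

/-- The min-cut entropy `S_Y`: the minimum of `‖C‖` over all `Y`-cuts. -/
noncomputable def gEntropy {N : ℕ} (G : GraphModel N) (Y : PSet N) : ℝ :=
  sInf (cutCost G '' {C : Finset G.V | IsCut G Y C})

/-- The mutual information `I(Y:Z) = S_Y + S_Z - S_{Y∪Z}` computed from min-cuts. -/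
noncomputable def gMI {N : ℕ} (G : GraphModel N) (Y Z : PSet N) : ℝ :=
  gEntropy G Y + gEntropy G Z - gEntropy G (Y ∪ Z)

/-- Reachability inside the subgraph of `G` induced by the vertex set `C`. -/
def Reaches {N : ℕ} (G : GraphModel N) (C : Finset G.V) : G.V → G.V → Prop :=
  Relation.ReflTransGen (fun a b => a ∈ C ∧ b ∈ C ∧ 0 < G.w a b)

/-- `D` is the vertex set of a connected component of the subgraph of `G` induced
by `C`. -/
def IsCompOf {N : ℕ} (G : GraphModel N) (C D : Finset G.V) : Prop :=
  ∃ v ∈ C, ∀ u : G.V, u ∈ D ↔ (u ∈ C ∧ Reaches G C v u)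

/-- The graph model is simple: the labeling is a bijection between the boundary
vertices and `⟦N⟧`, i.e. every party labels exactly one vertex. -/
def IsSimple {N : ℕ} (G : GraphModel N) : Prop :=
  ∀ ℓ : Party N, ∃! v : G.V, G.label v = some ℓ

/-- The underlying simple graph of a graph model: an edge wherever the weight is
strictly positive. -/
def GraphModel.toSimpleGraph {N : ℕ} (G : GraphModel N) : SimpleGraph G.V where
  Adj u v := 0 < G.w u v
  symm := by
    constructor
    intro u v h
    rw [G.w_symm v u]
    exact h
  loopless := by
    constructor
    intro v h
    rw [G.w_loopless v] at h
    exact lt_irrefl 0 h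

/-- The line graph `L_{H_P}` of the correlation hypergraph: vertices are the
hyperedges of `H_P`, two distinct hyperedges being adjacent iff they intersect. -/
def lineGraph {N : ℕ} (P : Set (MI N)) : SimpleGraph {X : PSet N // X ∈ Hedge P} where
  Adj e f := e ≠ f ∧ (e.1 ∩ f.1).Nonempty
  symm := by
    constructor
    intro e f h
    refine ⟨h.1.symm, ?_⟩
    rw [Finset.inter_comm]
    exact h.2
  loopless := by
    constructor
    intro e h
    exact h.1 rfl

/-- A simple graph is chordal if every cycle with at least four vertices has a chord,
i.e. an edge of the graph joining two vertices of the cycle which is not an edge of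
the cycle (equivalently, joining two non-consecutive vertices of the cycle). -/
def IsChordal {V : Type} (G : SimpleGraph V) : Prop :=
  ∀ (x : V) (c : G.Walk x x), c.IsCycle → 4 ≤ c.length →
    ∃ u w : V, u ∈ c.support ∧ w ∈ c.support ∧ G.Adj u w ∧ s(u, w) ∉ c.edges


/-! ### Auxiliary lemmas: cuts and min-cut entropies -/

section CutLemmas
variable {N : ℕ} (G : GraphModel N)

lemma cutCost_nonneg (C : Finset G.V) : 0 ≤ cutCost G C :=
  Finset.sum_nonneg fun u _ => Finset.sum_nonneg fun v _ => G.w_nonneg u v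

open Classical in
lemma exists_cut (Y : PSet N) : ∃ C : Finset G.V, IsCut G Y C := by
  refine ⟨Finset.univ.filter (fun u => ∃ ℓ ∈ Y, G.label u = some ℓ), ?_⟩
  intro u ℓ hu
  simp only [Finset.mem_filter, Finset.mem_univ, true_and]
  constructor
  · rintro ⟨ℓ', hℓ', h'⟩; rw [hu] at h'; cases h'; exact hℓ'
  · intro h; exact ⟨ℓ, h, hu⟩

lemma cutSet_finite (Y : PSet N) : (cutCost G '' {C : Finset G.V | IsCut G Y C}).Finite :=
  (Set.toFinite _).image _

lemma cutSet_nonempty (Y : PSet N) : (cutCost G '' {C : Finset G.V | IsCut G Y C}).Nonempty := by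
  obtain ⟨C, hC⟩ := exists_cut G Y
  exact ⟨cutCost G C, C, hC, rfl⟩

lemma gEntropy_le {Y : PSet N} {C : Finset G.V} (h : IsCut G Y C) :
    gEntropy G Y ≤ cutCost G C :=
  csInf_le (cutSet_finite G Y).bddBelow ⟨C, h, rfl⟩

lemma exists_isMinCut (Y : PSet N) :
    ∃ C : Finset G.V, IsCut G Y C ∧ cutCost G C = gEntropy G Y := by
  obtain ⟨C, hC, hc⟩ := (cutSet_nonempty G Y).csInf_mem (cutSet_finite G Y)
  exact ⟨C, hC, hc⟩

lemma gEntropy_nonneg (Y : PSet N) : 0 ≤ gEntropy G Y := by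
  obtain ⟨C, hC, hc⟩ := exists_isMinCut G Y
  exact hc ▸ cutCost_nonneg G C

/-- Reformulation of the cut cost as a sum over all ordered pairs. -/
noncomputable def qcost (C : Finset G.V) : ℝ :=
  ∑ u ∈ Finset.univ, ∑ v ∈ Finset.univ,
    (if u ∈ C then (1:ℝ) else 0) * (if v ∈ C then 0 else 1) * G.w u v

lemma cutCost_eq_qcost (C : Finset G.V) : cutCost G C = qcost G C := by
  unfold qcost cutCost
  have h1 : ∀ u : G.V, ∑ v ∈ Finset.univ,
      (if u ∈ C then (1:ℝ) else 0) * (if v ∈ C then 0 else 1) * G.w u v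
      = if u ∈ C then ∑ v ∈ Cᶜ, G.w u v else 0 := by
    intro u
    by_cases hu : u ∈ C
    · simp only [hu, if_true, one_mul]
      have : ∀ v : G.V, (if v ∈ C then (0:ℝ) else 1) * G.w u v
          = if v ∈ Cᶜ then G.w u v else 0 := by
        intro v; by_cases hv : v ∈ C <;> simp [hv]
      rw [Finset.sum_congr rfl (fun v _ => this v), Finset.sum_ite_mem, Finset.univ_inter]
    · simp [hu]
  rw [Finset.sum_congr rfl (fun u _ => h1 u), Finset.sum_ite_mem, Finset.univ_inter]

lemma cutCost_submod (C D : Finset G.V) :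
    cutCost G (C ∪ D) + cutCost G (C ∩ D) ≤ cutCost G C + cutCost G D := by
  simp only [cutCost_eq_qcost]
  unfold qcost
  rw [← Finset.sum_add_distrib, ← Finset.sum_add_distrib]
  refine Finset.sum_le_sum fun u _ => ?_
  rw [← Finset.sum_add_distrib, ← Finset.sum_add_distrib]
  refine Finset.sum_le_sum fun v _ => ?_
  have := G.w_nonneg u v
  by_cases h1 : u ∈ C <;> by_cases h2 : u ∈ D <;> by_cases h3 : v ∈ C <;> by_cases h4 : v ∈ D <;>
    simp [Finset.mem_union, Finset.mem_inter, h1, h2, h3, h4] <;> linarith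

lemma cutCost_compl (C : Finset G.V) : cutCost G Cᶜ = cutCost G C := by
  unfold cutCost
  rw [compl_compl, Finset.sum_comm]
  exact Finset.sum_congr rfl fun u _ => Finset.sum_congr rfl fun v _ => G.w_symm v u

lemma cutCost_posimod (C D : Finset G.V) :
    cutCost G (C \ D) + cutCost G (D \ C) ≤ cutCost G C + cutCost G D := by
  have h := cutCost_submod G C Dᶜ
  rw [cutCost_compl G D] at *
  have e1 : C ∪ Dᶜ = (D \ C)ᶜ := by ext x; simp [Finset.mem_sdiff]; tauto
  have e2 : C ∩ Dᶜ = C \ D := by ext x; simp [Finset.mem_sdiff]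
  rw [e1, e2, cutCost_compl G (D \ C)] at h
  linarith [cutCost_submod G C Dᶜ, h]

lemma isCut_union {Y Z : PSet N} {C D : Finset G.V} (hC : IsCut G Y C) (hD : IsCut G Z D) :
    IsCut G (Y ∪ Z) (C ∪ D) := by
  intro u ℓ hu
  simp only [Finset.mem_union, hC u ℓ hu, hD u ℓ hu]

lemma isCut_inter {Y Z : PSet N} {C D : Finset G.V} (hC : IsCut G Y C) (hD : IsCut G Z D) :
    IsCut G (Y ∩ Z) (C ∩ D) := by
  intro u ℓ hu
  simp only [Finset.mem_inter, hC u ℓ hu, hD u ℓ hu]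

lemma isCut_sdiff {Y Z : PSet N} {C D : Finset G.V} (hC : IsCut G Y C) (hD : IsCut G Z D) :
    IsCut G (Y \ Z) (C \ D) := by
  intro u ℓ hu
  simp only [Finset.mem_sdiff, hC u ℓ hu, hD u ℓ hu]

lemma gEntropy_submod (Y Z : PSet N) :
    gEntropy G (Y ∪ Z) + gEntropy G (Y ∩ Z) ≤ gEntropy G Y + gEntropy G Z := by
  obtain ⟨C, hC, hc⟩ := exists_isMinCut G Y
  obtain ⟨D, hD, hd⟩ := exists_isMinCut G Z
  calc gEntropy G (Y ∪ Z) + gEntropy G (Y ∩ Z)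
      ≤ cutCost G (C ∪ D) + cutCost G (C ∩ D) :=
        add_le_add (gEntropy_le G (isCut_union G hC hD)) (gEntropy_le G (isCut_inter G hC hD))
    _ ≤ cutCost G C + cutCost G D := cutCost_submod G C D
    _ = gEntropy G Y + gEntropy G Z := by rw [hc, hd]

lemma gEntropy_empty : gEntropy G (∅ : PSet N) = 0 := by
  have h0 : IsCut G (∅ : PSet N) (∅ : Finset G.V) := by
    intro u ℓ hu; simp
  have h1 : cutCost G (∅ : Finset G.V) = 0 := by simp [cutCost]
  refine le_antisymm (h1 ▸ gEntropy_le G h0) (gEntropy_nonneg G _)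

lemma gEntropy_univ : gEntropy G (Finset.univ : PSet N) = 0 := by
  have h0 : IsCut G (Finset.univ : PSet N) (Finset.univ : Finset G.V) := by
    intro u ℓ hu; simp
  have h1 : cutCost G (Finset.univ : Finset G.V) = 0 := by simp [cutCost]
  refine le_antisymm (h1 ▸ gEntropy_le G h0) (gEntropy_nonneg G _)

lemma isCut_compl {Y : PSet N} {C : Finset G.V} (hC : IsCut G Y C) :
    IsCut G (Finset.univ \ Y) Cᶜ := by
  intro u ℓ hu
  simp only [Finset.mem_compl, Finset.mem_sdiff, Finset.mem_univ, true_and, hC u ℓ hu]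

lemma gEntropy_compl (Y : PSet N) : gEntropy G (Finset.univ \ Y) = gEntropy G Y := by
  unfold gEntropy
  congr 1
  ext x
  constructor
  · rintro ⟨C, hC, rfl⟩
    refine ⟨Cᶜ, ?_, cutCost_compl G C⟩
    have h2 := isCut_compl G hC
    rwa [show Finset.univ \ (Finset.univ \ Y) = Y by
      rw [Finset.sdiff_sdiff_self_left, Finset.univ_inter]] at h2
  · rintro ⟨C, hC, rfl⟩
    exact ⟨Cᶜ, isCut_compl G hC, cutCost_compl G C⟩

end CutLemmas


/-! ### Entropy vector realized by a graph model -/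

section Realized
variable {N : ℕ} {v : EntropyVec N} {T : GraphModel N}
variable (hreal : ∀ J : PSet N, J.Nonempty → (0 : Party N) ∉ J → v.S J = gEntropy T J)

include hreal in
lemma vS_eq : ∀ W : PSet N, v.S W = gEntropy T W := by
  intro W
  by_cases h0 : (0 : Party N) ∈ W
  · rw [v.S_purify W h0, ← gEntropy_compl T W]
    rcases Finset.eq_empty_or_nonempty (Finset.univ \ W) with he | hne
    · rw [he, v.S_empty, gEntropy_empty T]
    · exact hreal _ hne (by simp [h0])
  · rcases Finset.eq_empty_or_nonempty W with he | hne
    · rw [he, v.S_empty, (gEntropy_empty T).symm]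
    · exact hreal W hne h0

include hreal in
lemma vI_eq (Y Z : PSet N) :
    v.I Y Z = gEntropy T Y + gEntropy T Z - gEntropy T (Y ∪ Z) := by
  unfold EntropyVec.I
  rw [vS_eq hreal, vS_eq hreal, vS_eq hreal]

include hreal in
lemma v_inSAC : v.InSAC := by
  intro Y Z _ _ hd
  have h := gEntropy_submod T Y Z
  rw [Finset.disjoint_iff_inter_eq_empty.mp hd, gEntropy_empty T] at h
  rw [vI_eq hreal]
  linarith

include hreal in
lemma vI_mono_right {Y Z Z' : PSet N} (hZ : Z ⊆ Z') (hd : Disjoint Y Z') :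
    v.I Y Z ≤ v.I Y Z' := by
  have h := gEntropy_submod T (Y ∪ Z) Z'
  have e1 : (Y ∪ Z) ∪ Z' = Y ∪ Z' := by
    rw [Finset.union_assoc, Finset.union_eq_right.mpr hZ]
  have e2 : (Y ∪ Z) ∩ Z' = Z := by
    rw [Finset.union_inter_distrib_right, Finset.disjoint_iff_inter_eq_empty.mp hd,
      Finset.empty_union, Finset.inter_eq_left.mpr hZ]
  rw [e1, e2] at h
  rw [vI_eq hreal, vI_eq hreal]
  linarith

lemma vI_comm (Y Z : PSet N) : v.I Y Z = v.I Z Y := by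
  unfold EntropyVec.I
  rw [Finset.union_comm]; ring

include hreal in
lemma vI_mono {Y Z Y' Z' : PSet N} (hY : Y ⊆ Y') (hZ : Z ⊆ Z') (hd : Disjoint Y' Z') :
    v.I Y Z ≤ v.I Y' Z' := by
  calc v.I Y Z ≤ v.I Y Z' := vI_mono_right hreal hZ (Finset.disjoint_of_subset_left hY hd)
    _ = v.I Z' Y := vI_comm Y Z'
    _ ≤ v.I Z' Y' := vI_mono_right hreal hY hd.symm
    _ = v.I Y' Z' := vI_comm Z' Y'

include hreal in
lemma v_downset : IsMIDownSet v.PMI := by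
  rintro m m' ⟨Y, Z, rfl, hYne, hZne, hYZ⟩ ⟨Y', Z', hm', hY'ne, hZ'ne, hY'Z', hI'⟩
    ⟨A, B, A', B', hAB, hA'B', hAA', hBB'⟩
  refine ⟨Y, Z, rfl, hYne, hZne, hYZ, ?_⟩
  have hsac := v_inSAC hreal Y Z hYne hZne hYZ
  -- identify representatives
  rw [Sym2.eq_iff] at hAB
  rw [hm', Sym2.eq_iff] at hA'B'
  have hle : v.I Y Z ≤ v.I Y' Z' := by
    rcases hAB with ⟨rfl, rfl⟩ | ⟨rfl, rfl⟩ <;> rcases hA'B' with ⟨rfl, rfl⟩ | ⟨rfl, rfl⟩ <;>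
      first
        | exact vI_mono hreal hAA' hBB' hY'Z'
        | exact vI_mono hreal hBB' hAA' hY'Z'
        | (rw [vI_comm]
           first
             | exact vI_mono hreal hAA' hBB' hY'Z'
             | exact vI_mono hreal hBB' hAA' hY'Z')
  linarith [hI' ▸ hle]

end Realized


/-! ### Min cuts: existence of minimal min cuts, splitting, connectivity -/

section MinCuts
variable {N : ℕ} (G : GraphModel N)

lemma isMinCut_cost {Y : PSet N} {C : Finset G.V} (h : IsMinCut G Y C) :
    cutCost G C = gEntropy G Y := by
  obtain ⟨C₀, hC₀, hc₀⟩ := exists_isMinCut G Y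
  exact le_antisymm (hc₀ ▸ h.2 C₀ hC₀) (gEntropy_le G h.1)

lemma exists_isMinimalMinCut (Y : PSet N) : ∃ C : Finset G.V, IsMinimalMinCut G Y C := by
  have hne : {C : Finset G.V | IsMinCut G Y C}.Nonempty := by
    obtain ⟨C, hC, hc⟩ := exists_isMinCut G Y
    exact ⟨C, hC, fun C' hC' => hc ▸ gEntropy_le G hC'⟩
  obtain ⟨C, hC, hmin⟩ := Set.Finite.exists_minimal (Set.toFinite _) hne
  refine ⟨C, hC, fun C' hC' hsub => ?_⟩
  exact le_antisymm hsub (hmin hC' hsub)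

lemma cutCost_split {C D : Finset G.V} (hDC : D ⊆ C)
    (hzero : ∀ u ∈ D, ∀ x ∈ C \ D, G.w u x = 0) :
    cutCost G D + cutCost G (C \ D) = cutCost G C := by
  classical
  have hDc : Dᶜ = Cᶜ ∪ (C \ D) := by
    ext x; simp only [Finset.mem_compl, Finset.mem_union, Finset.mem_sdiff]
    constructor
    · intro hx; by_cases hc : x ∈ C
      · exact Or.inr ⟨hc, hx⟩
      · exact Or.inl hc
    · rintro (hx | ⟨_, hx⟩) <;> [exact fun hd => hx (hDC hd); exact hx]
  have hCDc : (C \ D)ᶜ = Cᶜ ∪ D := by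
    ext x; simp only [Finset.mem_compl, Finset.mem_union, Finset.mem_sdiff]
    constructor
    · intro hx; by_cases hc : x ∈ C
      · exact Or.inr (by by_contra hd; exact hx ⟨hc, hd⟩)
      · exact Or.inl hc
    · rintro (hx | hx)
      · exact fun h => hx h.1
      · exact fun h => h.2 hx
  have hd1 : Disjoint (Cᶜ) (C \ D) := by
    rw [Finset.disjoint_left]; intro x hx hx'
    exact (Finset.mem_compl.mp hx) (Finset.mem_sdiff.mp hx').1
  have hd2 : Disjoint (Cᶜ) D := by
    rw [Finset.disjoint_left]; intro x hx hx'
    exact (Finset.mem_compl.mp hx) (hDC hx')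
  have hd3 : Disjoint D (C \ D) := by
    rw [Finset.disjoint_left]; intro x hx hx'
    exact (Finset.mem_sdiff.mp hx').2 hx
  have e1 : cutCost G D = ∑ u ∈ D, ∑ v ∈ Cᶜ, G.w u v := by
    unfold cutCost
    rw [hDc]
    refine Finset.sum_congr rfl fun u hu => ?_
    rw [Finset.sum_union hd1]
    have : ∑ v ∈ C \ D, G.w u v = 0 :=
      Finset.sum_eq_zero fun v hv => hzero u hu v hv
    rw [this, add_zero]
  have e2 : cutCost G (C \ D) = ∑ u ∈ C \ D, ∑ v ∈ Cᶜ, G.w u v := by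
    unfold cutCost
    rw [hCDc]
    refine Finset.sum_congr rfl fun u hu => ?_
    rw [Finset.sum_union hd2]
    have : ∑ v ∈ D, G.w u v = 0 :=
      Finset.sum_eq_zero fun v hv => by rw [G.w_symm]; exact hzero v hv u hu
    rw [this, add_zero]
  have e3 : cutCost G C = ∑ u ∈ D, ∑ v ∈ Cᶜ, G.w u v + ∑ u ∈ C \ D, ∑ v ∈ Cᶜ, G.w u v := by
    unfold cutCost
    rw [← Finset.sum_union hd3, Finset.union_sdiff_of_subset hDC]
  rw [e1, e2, e3]

lemma reaches_walk {C : Finset G.V} {a a' : G.V} (h : Reaches G C a a') (ha' : a' ∈ C) :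
    ∃ q : G.toSimpleGraph.Walk a a', ∀ x ∈ q.support, x ∈ C := by
  induction h using Relation.ReflTransGen.head_induction_on with
  | refl => exact ⟨SimpleGraph.Walk.nil, by simp [ha']⟩
  | head hstep _ ih =>
    obtain ⟨q, hq⟩ := ih
    refine ⟨SimpleGraph.Walk.cons (show G.toSimpleGraph.Adj _ _ from hstep.2.2) q, ?_⟩
    intro x hx
    rw [SimpleGraph.Walk.support_cons, List.mem_cons] at hx
    rcases hx with rfl | hx
    · exact hstep.1
    · exact hq x hx

end MinCuts

/-! ### Trees: canonical paths -/

section Trees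
variable {V : Type} {G : SimpleGraph V} [DecidableEq V]

noncomputable def treePath (hG : G.Connected) (a b : V) : G.Walk a b :=
  (hG.preconnected a b).some.bypass

lemma treePath_isPath (hG : G.Connected) (a b : V) : (treePath hG a b).IsPath :=
  SimpleGraph.Walk.bypass_isPath _

lemma treePath_support_subset (hG : G.Connected) (hac : G.IsAcyclic) {a b : V}
    (q : G.Walk a b) : (treePath hG a b).support ⊆ q.support := by
  have hq : (⟨q.bypass, q.bypass_isPath⟩ : G.Path a b)
      = ⟨treePath hG a b, treePath_isPath hG a b⟩ := hac.path_unique _ _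
  have : q.bypass = treePath hG a b := congrArg Subtype.val hq
  rw [← this]
  exact q.support_bypass_subset

lemma treePath_dichotomy (hG : G.Connected) (hac : G.IsAcyclic) {x y : V} (u : V)
    (hadj : G.Adj x y) :
    x ∈ (treePath hG u y).support ∨ y ∈ (treePath hG u x).support := by
  by_cases hy : y ∈ (treePath hG u x).support
  · exact Or.inr hy
  · left
    set p := treePath hG u x with hp
    have hpath : (p.concat hadj).IsPath := by
      rw [SimpleGraph.Walk.isPath_def, SimpleGraph.Walk.support_concat,
        List.nodup_append]
      refine ⟨(treePath_isPath hG u x).2, List.nodup_singleton y, ?_⟩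
      intro z hz z' hz'
      rw [List.mem_singleton] at hz'
      subst hz'
      rintro rfl
      exact hy hz
    have hq : (⟨p.concat hadj, hpath⟩ : G.Path u y)
        = ⟨treePath hG u y, treePath_isPath hG u y⟩ := hac.path_unique _ _
    have hsup : (p.concat hadj).support = (treePath hG u y).support :=
      congrArg SimpleGraph.Walk.support (congrArg Subtype.val hq)
    rw [← hsup, SimpleGraph.Walk.support_concat, List.mem_append]
    exact Or.inl (SimpleGraph.Walk.end_mem_support p)

lemma walk_crossing {a b : V} (q : G.Walk a b) (A : Set V) (ha : a ∈ A) (hb : b ∉ A) :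
    ∃ x y : V, G.Adj x y ∧ x ∈ A ∧ y ∉ A ∧ y ∈ q.support := by
  induction q with
  | nil => exact absurd ha hb
  | @cons u c d hadj q ih =>
    by_cases hc : c ∈ A
    · obtain ⟨x, y, h1, h2, h3, h4⟩ := ih hc hb
      exact ⟨x, y, h1, h2, h3, by rw [SimpleGraph.Walk.support_cons]; exact List.mem_cons_of_mem _ h4⟩
    · refine ⟨u, c, hadj, ha, hc, ?_⟩
      rw [SimpleGraph.Walk.support_cons]
      exact List.mem_cons_of_mem _ (SimpleGraph.Walk.start_mem_support q)

end Trees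


/-! ### Structure of minimal min cuts for positive β-sets -/

section Structure
variable {N : ℕ} {v : EntropyVec N} {T : GraphModel N}

/-- If `X` and `X'` are disjoint, then minimal min cuts for them are disjoint
(posimodularity argument). -/
lemma minimalMinCut_disjoint {X X' : PSet N} (hXX' : X ∩ X' = ∅)
    {C C' : Finset T.V} (hC : IsMinimalMinCut T X C) (hC' : IsMinCut T X' C') :
    C ∩ C' = ∅ := by
  have hXcut : IsCut T X (C \ C') := by
    have := isCut_sdiff T hC.1.1 hC'.1
    rwa [show X \ X' = X by
      rw [Finset.sdiff_eq_self_iff_disjoint, Finset.disjoint_iff_inter_eq_empty]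
      exact hXX'] at this
  have hX'cut : IsCut T X' (C' \ C) := by
    have := isCut_sdiff T hC'.1 hC.1.1
    rwa [show X' \ X = X' by
      rw [Finset.sdiff_eq_self_iff_disjoint, Finset.disjoint_iff_inter_eq_empty,
        Finset.inter_comm]
      exact hXX'] at this
  have hposi := cutCost_posimod T C C'
  have h1 : gEntropy T X ≤ cutCost T (C \ C') := gEntropy_le T hXcut
  have h2 : gEntropy T X' ≤ cutCost T (C' \ C) := gEntropy_le T hX'cut
  have h3 : cutCost T C = gEntropy T X := isMinCut_cost T hC.1
  have h4 : cutCost T C' = gEntropy T X' := isMinCut_cost T hC'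
  have e1 : cutCost T (C \ C') = gEntropy T X := by linarith
  have hmc : IsMinCut T X (C \ C') :=
    ⟨hXcut, fun C'' hC'' => e1 ▸ gEntropy_le T hC''⟩
  have := hC.2 (C \ C') hmc (Finset.sdiff_subset)
  rw [← this]
  ext z; simp only [Finset.mem_inter, Finset.mem_sdiff, Finset.notMem_empty, iff_false]
  rintro ⟨⟨_, hz⟩, hz'⟩
  exact hz hz'

/-- A minimal min cut for a subsystem with positive β-set is connected. -/
lemma minimalMinCut_connected (hT : IsSimple T)
    (hreal : ∀ J : PSet N, J.Nonempty → (0 : Party N) ∉ J → v.S J = gEntropy T J)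
    {X : PSet N} (hpos : BPos v.PMI X)
    {C : Finset T.V} (hC : IsMinimalMinCut T X C) :
    ∀ a ∈ C, ∀ a' ∈ C, Reaches T C a a' := by
  classical
  intro a ha a' ha'
  by_contra hnr
  set D : Finset T.V := C.filter (fun u => Reaches T C a u) with hD
  have haD : a ∈ D := by
    rw [hD, Finset.mem_filter]
    exact ⟨ha, Relation.ReflTransGen.refl⟩
  have ha'D : a' ∉ D := by
    rw [hD, Finset.mem_filter]
    rintro ⟨_, h⟩; exact hnr h
  have hDC : D ⊆ C := Finset.filter_subset _ _
  have hzero : ∀ u ∈ D, ∀ x ∈ C \ D, T.w u x = 0 := by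
    intro u hu x hx
    rw [Finset.mem_sdiff] at hx
    by_contra hw
    have hw' : 0 < T.w u x := lt_of_le_of_ne (T.w_nonneg u x) (Ne.symm hw)
    rw [hD, Finset.mem_filter] at hu
    have : Reaches T C a x :=
      hu.2.tail ⟨hu.1, hx.1, hw'⟩
    exact hx.2 (by rw [hD, Finset.mem_filter]; exact ⟨hx.1, this⟩)
  have hsplit := cutCost_split T hDC hzero
  -- the boundary parties inside D
  set Y : PSet N := X.filter (fun ℓ => (hT ℓ).choose ∈ D) with hY
  set Z : PSet N := X \ Y with hZ
  have hbd : ∀ (u : T.V) (ℓ : Party N), T.label u = some ℓ → u = (hT ℓ).choose :=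
    fun u ℓ hu => (hT ℓ).choose_spec.2 u hu
  have hbl : ∀ ℓ : Party N, T.label (hT ℓ).choose = some ℓ := fun ℓ => (hT ℓ).choose_spec.1
  have hYmem : ∀ ℓ : Party N, ℓ ∈ Y ↔ ℓ ∈ X ∧ (hT ℓ).choose ∈ D := by
    intro ℓ; rw [hY]; exact Finset.mem_filter
  have hZmem : ∀ ℓ : Party N, ℓ ∈ Z ↔ ℓ ∈ X ∧ ℓ ∉ Y := by
    intro ℓ; rw [hZ]; exact Finset.mem_sdiff
  have hYcut : IsCut T Y D := by
    intro u ℓ hu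
    have hub := hbd u ℓ hu
    subst hub
    rw [hYmem ℓ]
    constructor
    · intro hud
      exact ⟨(hC.1.1 _ ℓ hu).mp (hDC hud), hud⟩
    · rintro ⟨_, hud⟩; exact hud
  have hZcut : IsCut T Z (C \ D) := by
    intro u ℓ hu
    have hub := hbd u ℓ hu
    subst hub
    rw [hZmem ℓ, hYmem ℓ, Finset.mem_sdiff]
    constructor
    · rintro ⟨hx, hd⟩
      exact ⟨(hC.1.1 _ ℓ hu).mp hx, fun hc => hd hc.2⟩
    · rintro ⟨hx, hd⟩
      refine ⟨(hC.1.1 _ ℓ hu).mpr hx, fun hdd => hd ⟨hx, hdd⟩⟩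
  rcases Finset.eq_empty_or_nonempty Y with hYe | hYne
  · -- D contains no boundary vertices: C \ D is an X-cut, contradicting minimality
    have hZX : Z = X := by rw [hZ, hYe, Finset.sdiff_empty]
    rw [hZX] at hZcut
    have hle : cutCost T (C \ D) ≤ cutCost T C := by
      have := cutCost_nonneg T D; linarith
    have hge : gEntropy T X ≤ cutCost T (C \ D) := gEntropy_le T hZcut
    have hcc : cutCost T C = gEntropy T X := isMinCut_cost T hC.1
    have hmc : IsMinCut T X (C \ D) :=
      ⟨hZcut, fun C'' hC'' => by
        have := gEntropy_le T hC''; linarith⟩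
    have := hC.2 (C \ D) hmc (Finset.sdiff_subset)
    have : a ∉ D := by
      rw [← this] at ha
      exact (Finset.mem_sdiff.mp ha).2
    exact this haD
  rcases Finset.eq_empty_or_nonempty Z with hZe | hZne
  · -- all boundary vertices of X are in D : D is an X-cut, contradicting minimality
    have hYX : Y = X := by
      rw [hZ] at hZe
      have := Finset.sdiff_eq_empty_iff_subset.mp hZe
      exact Finset.Subset.antisymm (Finset.filter_subset _ _) this
    rw [hYX] at hYcut
    have hle : cutCost T D ≤ cutCost T C := by
      have := cutCost_nonneg T (C \ D); linarith
    have hcc : cutCost T C = gEntropy T X := isMinCut_cost T hC.1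
    have hmc : IsMinCut T X D :=
      ⟨hYcut, fun C'' hC'' => by
        have := gEntropy_le T hC''; linarith⟩
    have hda := hC.2 D hmc hDC
    rw [hda] at ha'D
    exact ha'D ha'
  -- both Y and Z are nonempty: I(Y:Z) = 0, contradicting positivity of β(X)
  have hYZd : Disjoint Y Z := by
    rw [hZ]; exact Finset.disjoint_sdiff
  have hYZu : Y ∪ Z = X := by
    rw [hZ, Finset.union_sdiff_of_subset (Finset.filter_subset _ _)]
  have hSY : gEntropy T Y ≤ cutCost T D := gEntropy_le T hYcut
  have hSZ : gEntropy T Z ≤ cutCost T (C \ D) := gEntropy_le T hZcut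
  have hcc : cutCost T C = gEntropy T X := isMinCut_cost T hC.1
  have hI : v.I Y Z = 0 := by
    have hIeq := vI_eq hreal Y Z
    rw [hYZu] at hIeq
    have hsac := v_inSAC hreal Y Z hYne hZne hYZd
    have : v.I Y Z ≤ 0 := by rw [hIeq]; linarith
    linarith
  exact hpos s(Y, Z) ⟨Y, Z, rfl, hYne, hZne, hYZd, hYZu⟩
    ⟨Y, Z, rfl, hYne, hZne, hYZd, hI⟩

end Structure


/-! ### From walks in the line graph to walks in the tree -/

section LineWalk
variable {N : ℕ} {T : GraphModel N} {P : Set (MI N)}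

lemma line_walk_to_tree_walk (CC : {X : PSet N // X ∈ Hedge P} → Finset T.V)
    (hconn : ∀ E, ∀ a ∈ CC E, ∀ a' ∈ CC E,
      ∃ q : T.toSimpleGraph.Walk a a', ∀ x ∈ q.support, x ∈ CC E)
    (hint : ∀ E F : {X : PSet N // X ∈ Hedge P}, (E.1 ∩ F.1).Nonempty →
      ∃ z : T.V, z ∈ CC E ∧ z ∈ CC F) :
    ∀ {E F : {X : PSet N // X ∈ Hedge P}} (q : (lineGraph P).Walk E F)
      (a : T.V), a ∈ CC E → ∀ t : T.V, t ∈ CC F →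
      ∃ W : T.toSimpleGraph.Walk a t, ∀ z ∈ W.support, ∃ E' ∈ q.support, z ∈ CC E' := by
  intro E F q
  induction q with
  | nil =>
    intro a ha t ht
    obtain ⟨W, hW⟩ := hconn _ a ha t ht
    exact ⟨W, fun z hz => ⟨_, by simp, hW z hz⟩⟩
  | @cons E E₂ F hadj q ih =>
    intro a ha t ht
    have hadj' : E ≠ E₂ ∧ (E.1 ∩ E₂.1).Nonempty := hadj
    obtain ⟨z, hz1, hz2⟩ := hint _ _ hadj'.2
    obtain ⟨W1, hW1⟩ := hconn _ a ha z hz1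
    obtain ⟨W2, hW2⟩ := ih z hz2 t ht
    refine ⟨W1.append W2, ?_⟩
    intro y hy
    rw [SimpleGraph.Walk.support_append, List.mem_append] at hy
    rcases hy with hy | hy
    · exact ⟨E, by simp, hW1 y hy⟩
    · obtain ⟨E', hE', hyE'⟩ := hW2 y (List.mem_of_mem_tail hy)
      exact ⟨E', by rw [SimpleGraph.Walk.support_cons]; exact List.mem_cons_of_mem _ hE', hyE'⟩

end LineWalk


/-! ### Statement 19 -/

/-- Let `S` be an `N`-party entropy vector realized by a simple tree
graph model `T`.  Then the PMI `P(S)` is a down-set in the MI-poset (hence a KC-PMI),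
and the line graph `L_{H_{P(S)}}` of the correlation hypergraph of `P(S)` is chordal. -/
theorem statement19 {N : ℕ} (hN : 2 ≤ N) (v : EntropyVec N)
    (T : GraphModel N) (hT : IsSimple T) (htree : (T.toSimpleGraph).IsTree)
    (hreal : ∀ J : PSet N, J.Nonempty → (0 : Party N) ∉ J → v.S J = gEntropy T J) :
    IsMIDownSet v.PMI ∧ IsKCPMI v.PMI ∧ IsChordal (lineGraph v.PMI) := by
  classical
  have hdown := v_downset hreal
  refine ⟨hdown, ⟨⟨v, v_inSAC hreal, rfl⟩, hdown⟩, ?_⟩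
  -- Setup: minimal min cuts for all hyperedges
  have hbl : ∀ ℓ : Party N, T.label (hT ℓ).choose = some ℓ := fun ℓ => (hT ℓ).choose_spec.1
  set CC : {X : PSet N // X ∈ Hedge v.PMI} → Finset T.V :=
    fun E => (exists_isMinimalMinCut T E.1).choose with hCCdef
  have hCC : ∀ E, IsMinimalMinCut T E.1 (CC E) :=
    fun E => (exists_isMinimalMinCut T E.1).choose_spec
  have hmem : ∀ E (ℓ : Party N), (hT ℓ).choose ∈ CC E ↔ ℓ ∈ E.1 :=
    fun E ℓ => (hCC E).1.1 _ ℓ (hbl ℓ)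
  have hdisj : ∀ E F : {X : PSet N // X ∈ Hedge v.PMI}, E.1 ∩ F.1 = ∅ →
      ∀ z : T.V, z ∈ CC E → z ∈ CC F → False := by
    intro E F hEF z h1 h2
    have hd := minimalMinCut_disjoint hEF (hCC E) (hCC F).1
    have : z ∈ CC E ∩ CC F := Finset.mem_inter.mpr ⟨h1, h2⟩
    rw [hd] at this
    exact absurd this (Finset.notMem_empty z)
  have hints : ∀ E F : {X : PSet N // X ∈ Hedge v.PMI}, ∀ z : T.V,
      z ∈ CC E → z ∈ CC F → (E.1 ∩ F.1).Nonempty := by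
    intro E F z h1 h2
    by_contra hcon
    exact hdisj E F (Finset.not_nonempty_iff_eq_empty.mp hcon) z h1 h2
  have hint : ∀ E F : {X : PSet N // X ∈ Hedge v.PMI}, (E.1 ∩ F.1).Nonempty →
      ∃ z : T.V, z ∈ CC E ∧ z ∈ CC F := by
    rintro E F ⟨ℓ, hℓ⟩
    rw [Finset.mem_inter] at hℓ
    exact ⟨(hT ℓ).choose, (hmem E ℓ).mpr hℓ.1, (hmem F ℓ).mpr hℓ.2⟩
  have hconn : ∀ E, ∀ a ∈ CC E, ∀ a' ∈ CC E,
      ∃ q : T.toSimpleGraph.Walk a a', ∀ x ∈ q.support, x ∈ CC E := by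
    intro E a ha a' ha'
    exact reaches_walk T (minimalMinCut_connected hT hreal E.2.2 (hCC E) a ha a' ha') ha'
  have hGc : T.toSimpleGraph.Connected := htree.isConnected
  have hGa : T.toSimpleGraph.IsAcyclic := htree.IsAcyclic
  -- chordality
  intro E1 c hcyc hlen
  by_contra hno
  push_neg at hno
  cases c with
  | nil => simp at hlen
  | @cons _ E2 _ h1 c1 =>
  cases c1 with
  | nil => simp at hlen
  | @cons _ E3 _ h2 c2 =>
  cases c2 with
  | nil => simp at hlen
  | @cons _ E4 _ h3 c3 =>
  cases c3 with
  | nil => simp at hlen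
  | @cons _ E5 _ h4 q' =>
  set q := SimpleGraph.Walk.cons h4 q' with hqdef
  -- basic adjacency facts
  have h1' : E1 ≠ E2 ∧ (E1.1 ∩ E2.1).Nonempty := h1
  have h2' : E2 ≠ E3 ∧ (E2.1 ∩ E3.1).Nonempty := h2
  have h3' : E3 ≠ E4 ∧ (E3.1 ∩ E4.1).Nonempty := h3
  -- nodup facts
  have hnd := hcyc.support_nodup
  simp only [SimpleGraph.Walk.support_cons, List.tail_cons, List.nodup_cons] at hnd
  have hE2nq : E2 ∉ q.support := fun h => hnd.1 (List.mem_cons_of_mem _ h)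
  have hE3nq : E3 ∉ q.support := hnd.2.1
  have hE4nq' : E4 ∉ q'.support := by
    have hq4 := hnd.2.2
    rw [hqdef, SimpleGraph.Walk.support_cons] at hq4
    exact (List.nodup_cons.mp hq4).1
  have hE1q' : E1 ∈ q'.support := SimpleGraph.Walk.end_mem_support q'
  have hE14 : E1 ≠ E4 := fun h => hE4nq' (h ▸ hE1q')
  have hE13 : E1 ≠ E3 := by
    intro h
    apply hE3nq
    rw [← h, hqdef, SimpleGraph.Walk.support_cons, List.mem_cons]
    exact Or.inr hE1q'
  have hE24 : E2 ≠ E4 := by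
    intro h
    apply hE2nq
    rw [h, hqdef, SimpleGraph.Walk.support_cons]
    exact List.mem_cons_self
  have hE1q : E1 ∈ q.support := SimpleGraph.Walk.end_mem_support q
  -- membership in the cycle support
  have hsupc : ∀ F : {X : PSet N // X ∈ Hedge v.PMI},
      F = E1 ∨ F = E2 ∨ F = E3 ∨ F ∈ q.support →
      F ∈ (SimpleGraph.Walk.cons h1 (SimpleGraph.Walk.cons h2 (SimpleGraph.Walk.cons h3 q))).support := by
    intro F hF
    simp only [SimpleGraph.Walk.support_cons, List.mem_cons]
    rcases hF with rfl | rfl | rfl | h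
    · exact Or.inl rfl
    · exact Or.inr (Or.inl rfl)
    · exact Or.inr (Or.inr (Or.inl rfl))
    · exact Or.inr (Or.inr (Or.inr h))
  have hedges : (SimpleGraph.Walk.cons h1 (SimpleGraph.Walk.cons h2 (SimpleGraph.Walk.cons h3 q))).edges
      = s(E1, E2) :: s(E2, E3) :: s(E3, E4) :: q.edges := by
    simp only [SimpleGraph.Walk.edges_cons]
  -- no-chord consequences
  have hno' : ∀ F F' : {X : PSet N // X ∈ Hedge v.PMI},
      (F = E1 ∨ F = E2 ∨ F = E3 ∨ F ∈ q.support) →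
      (F' = E1 ∨ F' = E2 ∨ F' = E3 ∨ F' ∈ q.support) →
      F ≠ F' → (F.1 ∩ F'.1).Nonempty →
      s(F, F') ∈ s(E1, E2) :: s(E2, E3) :: s(E3, E4) :: q.edges := by
    intro F F' hF hF' hne hi
    rw [← hedges]
    exact hno F F' (hsupc F hF) (hsupc F' hF') ⟨hne, hi⟩
  -- N1 : anything in q meeting E2 is E1
  have hN1 : ∀ F ∈ q.support, (E2.1 ∩ F.1).Nonempty → F = E1 := by
    intro F hF hi
    have hne : E2 ≠ F := fun h => hE2nq (h ▸ hF)
    have hm := hno' E2 F (Or.inr (Or.inl rfl)) (Or.inr (Or.inr (Or.inr hF))) hne hi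
    simp only [List.mem_cons] at hm
    rcases hm with hm | hm | hm | hm
    · rw [Sym2.eq_iff] at hm
      rcases hm with ⟨h, _⟩ | ⟨_, h⟩
      · exact absurd h.symm h1'.1
      · exact h
    · rw [Sym2.eq_iff] at hm
      rcases hm with ⟨_, h⟩ | ⟨h, _⟩
      · exact absurd (h ▸ hF) hE3nq
      · exact absurd h h2'.1
    · rw [Sym2.eq_iff] at hm
      rcases hm with ⟨h, _⟩ | ⟨h, _⟩
      · exact absurd h h2'.1
      · exact absurd h hE24
    · exact absurd (SimpleGraph.Walk.fst_mem_support_of_mem_edges q hm) hE2nq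
  -- N2 : anything in q meeting E3 is E4
  have hN2 : ∀ F ∈ q.support, (E3.1 ∩ F.1).Nonempty → F = E4 := by
    intro F hF hi
    have hne : E3 ≠ F := fun h => hE3nq (h ▸ hF)
    have hm := hno' E3 F (Or.inr (Or.inr (Or.inl rfl))) (Or.inr (Or.inr (Or.inr hF))) hne hi
    simp only [List.mem_cons] at hm
    rcases hm with hm | hm | hm | hm
    · rw [Sym2.eq_iff] at hm
      rcases hm with ⟨h, _⟩ | ⟨h, _⟩
      · exact absurd h hE13.symm
      · exact absurd h h2'.1.symm
    · rw [Sym2.eq_iff] at hm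
      rcases hm with ⟨h, _⟩ | ⟨_, h⟩
      · exact absurd h h2'.1.symm
      · exact absurd (h ▸ hF) hE2nq
    · rw [Sym2.eq_iff] at hm
      rcases hm with ⟨_, h⟩ | ⟨h, _⟩
      · exact h
      · exact absurd h h3'.1
    · exact absurd (SimpleGraph.Walk.fst_mem_support_of_mem_edges q hm) hE3nq
  -- N3 : E1 and E3 do not meet
  have hN3 : ¬(E1.1 ∩ E3.1).Nonempty := by
    intro hi
    have hm := hno' E1 E3 (Or.inl rfl) (Or.inr (Or.inr (Or.inl rfl))) hE13 hi
    simp only [List.mem_cons] at hm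
    rcases hm with hm | hm | hm | hm
    · rw [Sym2.eq_iff] at hm
      rcases hm with ⟨_, h⟩ | ⟨h, _⟩
      · exact h2'.1.symm h
      · exact h1'.1 h
    · rw [Sym2.eq_iff] at hm
      rcases hm with ⟨h, _⟩ | ⟨_, h⟩
      · exact h1'.1 h
      · exact h2'.1.symm h
    · rw [Sym2.eq_iff] at hm
      rcases hm with ⟨h, _⟩ | ⟨h, _⟩
      · exact hE13 h
      · exact hE14 h
    · exact hE3nq (SimpleGraph.Walk.snd_mem_support_of_mem_edges q hm)
  -- N4 : E2 and E4 do not meet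
  have hN4 : ¬(E2.1 ∩ E4.1).Nonempty := by
    intro hi
    have hm := hno' E2 E4 (Or.inr (Or.inl rfl))
      (Or.inr (Or.inr (Or.inr (by rw [hqdef, SimpleGraph.Walk.support_cons]; exact List.mem_cons_self)))) hE24 hi
    simp only [List.mem_cons] at hm
    rcases hm with hm | hm | hm | hm
    · rw [Sym2.eq_iff] at hm
      rcases hm with ⟨h, _⟩ | ⟨_, h⟩
      · exact h1'.1 h.symm
      · exact hE14 h.symm
    · rw [Sym2.eq_iff] at hm
      rcases hm with ⟨_, h⟩ | ⟨h, _⟩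
      · exact h3'.1 h.symm
      · exact h2'.1 h
    · rw [Sym2.eq_iff] at hm
      rcases hm with ⟨h, _⟩ | ⟨h, _⟩
      · exact h2'.1 h
      · exact hE24 h
    · exact hE2nq (SimpleGraph.Walk.fst_mem_support_of_mem_edges q hm)
  -- boundary vertices witnessing consecutive intersections
  obtain ⟨ℓ1, hℓ1⟩ := h1'.2
  obtain ⟨ℓ2, hℓ2⟩ := h2'.2
  obtain ⟨ℓ3, hℓ3⟩ := h3'.2
  rw [Finset.mem_inter] at hℓ1 hℓ2 hℓ3
  set u1 : T.V := (hT ℓ1).choose with hu1def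
  set u2 : T.V := (hT ℓ2).choose with hu2def
  set u3 : T.V := (hT ℓ3).choose with hu3def
  have hu1E1 : u1 ∈ CC E1 := (hmem E1 ℓ1).mpr hℓ1.1
  have hu1E2 : u1 ∈ CC E2 := (hmem E2 ℓ1).mpr hℓ1.2
  have hu2E2 : u2 ∈ CC E2 := (hmem E2 ℓ2).mpr hℓ2.1
  have hu2E3 : u2 ∈ CC E3 := (hmem E3 ℓ2).mpr hℓ2.2
  have hu3E3 : u3 ∈ CC E3 := (hmem E3 ℓ3).mpr hℓ3.1
  have hu3E4 : u3 ∈ CC E4 := (hmem E4 ℓ3).mpr hℓ3.2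
  -- walk from u1 to u3 through CC E2 ∪ CC E3
  obtain ⟨Wa, hWa⟩ := hconn E2 u1 hu1E2 u2 hu2E2
  obtain ⟨Wb, hWb⟩ := hconn E3 u2 hu2E3 u3 hu3E3
  -- walk from u3 to u1 through the cuts along q
  obtain ⟨W2, hW2⟩ := line_walk_to_tree_walk CC hconn hint q u3 hu3E4 u1 hu1E1
  -- the canonical tree path from u1 to u3
  set Q := treePath hGc u1 u3 with hQdef
  have hQ23 : ∀ z ∈ Q.support, z ∈ CC E2 ∨ z ∈ CC E3 := by
    intro z hz
    have hsub := treePath_support_subset hGc hGa (Wa.append Wb)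
    have := hsub hz
    rw [SimpleGraph.Walk.support_append, List.mem_append] at this
    rcases this with h | h
    · exact Or.inl (hWa z h)
    · exact Or.inr (hWb z (List.mem_of_mem_tail h))
  have hQq : ∀ z ∈ Q.support, ∃ E' ∈ q.support, z ∈ CC E' := by
    intro z hz
    have hsub := treePath_support_subset hGc hGa W2.reverse
    have := hsub hz
    rw [SimpleGraph.Walk.support_reverse, List.mem_reverse] at this
    exact hW2 z this
  -- classification of Q's vertices
  have hclass : ∀ z ∈ Q.support,
      (z ∈ CC E1 ∧ z ∈ CC E2) ∨ (z ∈ CC E3 ∧ z ∈ CC E4) := by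
    intro z hz
    obtain ⟨E', hE', hzE'⟩ := hQq z hz
    rcases hQ23 z hz with h2z | h3z
    · left
      have hF : E' = E1 := hN1 E' hE' (hints E2 E' z h2z hzE')
      exact ⟨hF ▸ hzE', h2z⟩
    · right
      have hF : E' = E4 := hN2 E' hE' (hints E3 E' z h3z hzE')
      exact ⟨h3z, hF ▸ hzE'⟩
  have hAB : ∀ z : T.V, z ∈ CC E1 ∧ z ∈ CC E2 → z ∈ CC E3 ∧ z ∈ CC E4 → False := by
    rintro z ⟨hz1, _⟩ ⟨hz3, _⟩
    exact hN3 (hints E1 E3 z hz1 hz3)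
  -- crossing
  have hu3nA : u3 ∉ ({z : T.V | z ∈ CC E1 ∧ z ∈ CC E2} : Set T.V) := by
    intro h
    exact hAB u3 h ⟨hu3E3, hu3E4⟩
  obtain ⟨x, y, hxy, hxA, hynA, hyQ⟩ :=
    walk_crossing Q {z : T.V | z ∈ CC E1 ∧ z ∈ CC E2} ⟨hu1E1, hu1E2⟩ hu3nA
  have hyB : y ∈ CC E3 ∧ y ∈ CC E4 := by
    rcases hclass y hyQ with h | h
    · exact absurd h hynA
    · exact h
  have hxA' : x ∈ CC E1 ∧ x ∈ CC E2 := hxA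
  -- final dichotomy
  rcases treePath_dichotomy hGc hGa u2 hxy with hcase | hcase
  · -- x on the tree path from u2 to y, which lies in CC E3
    obtain ⟨Wy, hWy⟩ := hconn E3 u2 hu2E3 y hyB.1
    have hsub := treePath_support_subset hGc hGa Wy
    have hx3 : x ∈ CC E3 := hWy x (hsub hcase)
    exact hN3 (hints E1 E3 x hxA'.1 hx3)
  · -- y on the tree path from u2 to x, which lies in CC E2
    obtain ⟨Wx, hWx⟩ := hconn E2 u2 hu2E2 x hxA'.2
    have hsub := treePath_support_subset hGc hGa Wx
    have hy2 : y ∈ CC E2 := hWx y (hsub hcase)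
    exact hN4 (hints E2 E4 y hy2 hyB.2)

end HEC
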